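/- arXiv:2503.02494 — 3 statements merged into one kernel-verified Lean document; each statement's English description precedes it below -/
import Mathlib

section
/- Let X ∈ O^{d,r}, λ > 1, ξ₀, ς ∈ ℝ^d. Then (λ ξ₀ - ς/2)^T ((λ-1) I_d + X X^T)^{-1} (λ ξ₀ - ς/2) - λ ξ₀^T ξ₀ = (λ/(λ-1)) tr((I_d - X X^T) ξ₀ ξ₀^T) - (1/(λ-1)) ς^T (λ I_d - X X^T) ξ₀ + (1/(4λ(λ-1))) ς^T (λ I_d - X X^T) ς. -/
open Matrix

theorem sup_value_explicit_identity
    (d r : ℕ) (hr : 1 ≤ r) (hrd : r < d)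
    (X : Matrix (Fin d) (Fin r) ℝ) (hX : Xᵀ * X = 1)
    (lam : ℝ) (hlam : 1 < lam) (ξ₀ ς : Fin d → ℝ) :
    (lam • ξ₀ - (2 : ℝ)⁻¹ • ς) ⬝ᵥ
        (((lam - 1) • (1 : Matrix (Fin d) (Fin d) ℝ) + X * Xᵀ)⁻¹.mulVec
          (lam • ξ₀ - (2 : ℝ)⁻¹ • ς)) - lam * (ξ₀ ⬝ᵥ ξ₀)
      = (lam / (lam - 1)) * ((1 - X * Xᵀ) * vecMulVec ξ₀ ξ₀).trace
        - (lam - 1)⁻¹ * (ς ⬝ᵥ ((lam • (1 : Matrix (Fin d) (Fin d) ℝ) - X * Xᵀ).mulVec ξ₀))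
        + (4 * lam * (lam - 1))⁻¹ *
            (ς ⬝ᵥ ((lam • (1 : Matrix (Fin d) (Fin d) ℝ) - X * Xᵀ).mulVec ς)) := by
  have hl0 : lam ≠ 0 := by linarith
  have hl1 : lam - 1 ≠ 0 := by intro h; linarith [h]
  set P : Matrix (Fin d) (Fin d) ℝ := X * Xᵀ with hPdef
  have hP : P * P = P := by
    rw [hPdef, Matrix.mul_assoc, ← Matrix.mul_assoc Xᵀ, hX, Matrix.one_mul]
  set A : Matrix (Fin d) (Fin d) ℝ := (lam - 1) • 1 + P with hAdef
  set B : Matrix (Fin d) (Fin d) ℝ := (lam - 1)⁻¹ • 1 - (lam * (lam - 1))⁻¹ • P with hBdef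
  have hAB : A * B = 1 := by
    rw [hAdef, hBdef]
    rw [Matrix.add_mul, Matrix.mul_sub, Matrix.mul_sub, Matrix.smul_mul, Matrix.smul_mul,
      Matrix.mul_smul, Matrix.mul_smul, Matrix.mul_smul, Matrix.mul_smul,
      Matrix.one_mul, Matrix.mul_one, hP]
    rw [Matrix.one_mul]
    match_scalars <;> field_simp <;> ring
  have hinv : A⁻¹ = B := Matrix.inv_eq_right_inv hAB
  have hsym : ∀ x y : Fin d → ℝ, x ⬝ᵥ P.mulVec y = y ⬝ᵥ P.mulVec x := by
    intro x y
    have hPt : Pᵀ = P := by rw [hPdef, Matrix.transpose_mul, Matrix.transpose_transpose]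
    rw [Matrix.dotProduct_mulVec, ← hPt, Matrix.vecMul_transpose, dotProduct_comm, hPt]
  have htr : ((1 - P) * vecMulVec ξ₀ ξ₀).trace = ξ₀ ⬝ᵥ ξ₀ - ξ₀ ⬝ᵥ P.mulVec ξ₀ := by
    have : ∀ M : Matrix (Fin d) (Fin d) ℝ, (M * vecMulVec ξ₀ ξ₀).trace = ξ₀ ⬝ᵥ M.mulVec ξ₀ := by
      intro M
      simp only [Matrix.trace, Matrix.diag, Matrix.mul_apply, Matrix.vecMulVec_apply,
        Matrix.mulVec, dotProduct, Finset.mul_sum]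
      apply Finset.sum_congr rfl; intro i _
      apply Finset.sum_congr rfl; intro j _
      ring
    rw [this, Matrix.sub_mulVec, Matrix.one_mulVec, dotProduct_sub]
  rw [hinv, hBdef, htr]
  simp only [Matrix.sub_mulVec, Matrix.smul_mulVec, Matrix.one_mulVec,
    Matrix.mulVec_smul, Matrix.mulVec_sub, dotProduct_sub, sub_dotProduct,
    dotProduct_smul, smul_dotProduct, smul_eq_mul, smul_smul]
  rw [hsym ξ₀ ς]
  rw [dotProduct_comm ς ξ₀]
  field_simp
  ring
end

section
/- Let w(X) = 2ρ‖(I_d - X X^T)Σ^{1/2}‖_F with ρ > 0 and Σ positive semidefinite. At any X ∈ O^{d,r} with w(X) ≠ 0, w is differentiable and the norm of its Riemannian gradient on the Stiefel manifold satisfies ‖grad w(X)‖_F = 2ρ ‖(I_d - X X^T) Σ X‖_F / ‖(I_d - X X^T) Σ^{1/2}‖_F ≤ 2ρ ‖Σ^{1/2}‖_F. -/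
open Matrix

attribute [local instance] Matrix.frobeniusNormedAddCommGroup Matrix.frobeniusNormedSpace

open scoped ComplexOrder in
/-- The positive semidefinite square root of a positive semidefinite matrix
(the definition Mathlib had under this name in Dec 2024; since removed). -/
noncomputable def Matrix.PosSemidef.sqrt {n 𝕜 : Type*} [Fintype n] [DecidableEq n] [RCLike 𝕜]
    {A : Matrix n n 𝕜} (hA : A.PosSemidef) : Matrix n n 𝕜 :=
  hA.1.eigenvectorUnitary.1 * diagonal (fun i => ((Real.sqrt (hA.1.eigenvalues i) : ℝ) : 𝕜)) *
  (star hA.1.eigenvectorUnitary : Matrix n n 𝕜)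

section Aux

variable {l m n : Type*} [Fintype l] [Fintype m] [Fintype n]

lemma aux_trace_eq_sum (A : Matrix m n ℝ) :
    (Aᵀ * A).trace = ∑ j, ∑ i, (A i j) ^ 2 := by
  simp [Matrix.trace, Matrix.mul_apply, Matrix.diag, sq]

lemma aux_trace_nonneg (A : Matrix m n ℝ) : 0 ≤ (Aᵀ * A).trace := by
  rw [aux_trace_eq_sum]
  positivity

lemma aux_sqrt_trace (A : Matrix m n ℝ) :
    Real.sqrt ((Aᵀ * A).trace) = ‖A‖ := by
  rw [aux_trace_eq_sum, Matrix.frobenius_norm_def, Real.sqrt_eq_rpow]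
  congr 1
  rw [Finset.sum_comm]
  refine Finset.sum_congr rfl fun i _ => Finset.sum_congr rfl fun j _ => ?_
  rw [Real.rpow_two, Real.norm_eq_abs, sq_abs, sq]

lemma aux_sq_norm (A : Matrix m n ℝ) : ‖A‖ ^ 2 = (Aᵀ * A).trace := by
  rw [← aux_sqrt_trace, Real.sq_sqrt (aux_trace_nonneg A)]

lemma aux_entry_abs_le (A : Matrix m n ℝ) (i : m) (j : n) : |A i j| ≤ ‖A‖ := by
  rw [← aux_sqrt_trace, ← Real.sqrt_sq_eq_abs]
  apply Real.sqrt_le_sqrt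
  rw [aux_trace_eq_sum]
  calc A i j ^ 2 ≤ ∑ i', A i' j ^ 2 :=
        Finset.single_le_sum (fun i' _ => sq_nonneg (A i' j)) (Finset.mem_univ i)
    _ ≤ ∑ j', ∑ i', A i' j' ^ 2 :=
        Finset.single_le_sum (fun j' _ => Finset.sum_nonneg fun i' _ => sq_nonneg (A i' j'))
          (Finset.mem_univ j)

lemma aux_isBBM_mul :
    IsBoundedBilinearMap ℝ (fun p : Matrix l m ℝ × Matrix m n ℝ => p.1 * p.2) :=
  { add_left := fun x₁ x₂ y => Matrix.add_mul x₁ x₂ y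
    smul_left := fun c x y => Matrix.smul_mul c x y
    add_right := fun x y₁ y₂ => Matrix.mul_add x y₁ y₂
    smul_right := fun c x y => Matrix.mul_smul x c y
    bound := ⟨1, one_pos, fun x y => by
      simpa using Matrix.frobenius_norm_mul x y⟩ }

lemma aux_isBBM_mulT :
    IsBoundedBilinearMap ℝ (fun p : Matrix m l ℝ × Matrix n l ℝ => p.1 * p.2ᵀ) :=
  { add_left := fun x₁ x₂ y => Matrix.add_mul x₁ x₂ yᵀ
    smul_left := fun c x y => Matrix.smul_mul c x yᵀ
    add_right := fun x y₁ y₂ => by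
      show x * (y₁ + y₂)ᵀ = _
      rw [Matrix.transpose_add, Matrix.mul_add]
    smul_right := fun c x y => by
      show x * (c • y)ᵀ = _
      rw [Matrix.transpose_smul, Matrix.mul_smul]
    bound := ⟨1, one_pos, fun x y => by
      simpa [Matrix.frobenius_norm_transpose] using Matrix.frobenius_norm_mul x yᵀ⟩ }

lemma aux_isBBM_Tmul :
    IsBoundedBilinearMap ℝ (fun p : Matrix m l ℝ × Matrix m n ℝ => p.1ᵀ * p.2) :=
  { add_left := fun x₁ x₂ y => by
      show (x₁ + x₂)ᵀ * y = _
      rw [Matrix.transpose_add, Matrix.add_mul]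
    smul_left := fun c x y => by
      show (c • x)ᵀ * y = _
      rw [Matrix.transpose_smul, Matrix.smul_mul]
    add_right := fun x y₁ y₂ => Matrix.mul_add xᵀ y₁ y₂
    smul_right := fun c x y => Matrix.mul_smul xᵀ c y
    bound := ⟨1, one_pos, fun x y => by
      simpa [Matrix.frobenius_norm_transpose] using Matrix.frobenius_norm_mul xᵀ y⟩ }

noncomputable def mulRightCLM (B : Matrix m n ℝ) :
    @ContinuousLinearMap ℝ ℝ _ _ (RingHom.id ℝ) (Matrix l m ℝ)
      PseudoMetricSpace.toUniformSpace.toTopologicalSpace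
      NormedAddCommGroup.toSeminormedAddCommGroup.toAddCommMonoid (Matrix l n ℝ)
      PseudoMetricSpace.toUniformSpace.toTopologicalSpace NormedAddCommGroup.toSeminormedAddCommGroup.toAddCommMonoid
      NormedSpace.toModule NormedSpace.toModule :=
  LinearMap.mkContinuous
    { toFun := fun Y => Y * B
      map_add' := fun Y₁ Y₂ => Matrix.add_mul Y₁ Y₂ B
      map_smul' := fun c Y => Matrix.smul_mul c Y B } ‖B‖
    (fun Y => by
      rw [mul_comm ‖B‖ ‖Y‖]
      exact Matrix.frobenius_norm_mul Y B)

@[simp] lemma mulRightCLM_apply (B : Matrix m n ℝ) (Y : Matrix l m ℝ) :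
    mulRightCLM B Y = Y * B := rfl

noncomputable def traceCLM : Matrix m m ℝ →L[ℝ] ℝ :=
  LinearMap.mkContinuous (Matrix.traceLinearMap m ℝ ℝ) (Fintype.card m)
    (fun Y => by
      show ‖Y.trace‖ ≤ (Fintype.card m : ℝ) * ‖Y‖
      rw [Real.norm_eq_abs, Matrix.trace]
      calc |∑ i, Y.diag i| ≤ ∑ i, |Y.diag i| := Finset.abs_sum_le_sum_abs _ _
        _ ≤ ∑ _i : m, ‖Y‖ := Finset.sum_le_sum fun i _ => aux_entry_abs_le Y i i
        _ = (Fintype.card m : ℝ) * ‖Y‖ := by simp [mul_comm])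

@[simp] lemma traceCLM_apply (Y : Matrix m m ℝ) :
    (traceCLM : Matrix m m ℝ →L[ℝ] ℝ) Y = Y.trace := rfl

lemma aux_psd_sqrt_transpose {d : ℕ} {S : Matrix (Fin d) (Fin d) ℝ} (hS : S.PosSemidef) :
    hS.sqrtᵀ = hS.sqrt := by
  unfold Matrix.PosSemidef.sqrt
  simp only [Matrix.transpose_mul, Matrix.diagonal_transpose,
    Matrix.star_eq_conjTranspose, Matrix.conjTranspose_eq_transpose_of_trivial,
    Matrix.transpose_transpose, Matrix.mul_assoc]

lemma aux_psd_sqrt_mul_self {d : ℕ} {S : Matrix (Fin d) (Fin d) ℝ} (hS : S.PosSemidef) :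
    hS.sqrt * hS.sqrt = S := by
  unfold Matrix.PosSemidef.sqrt
  conv_rhs => rw [hS.1.spectral_theorem, Unitary.conjStarAlgAut_apply]
  have hU : (star hS.1.eigenvectorUnitary : Matrix (Fin d) (Fin d) ℝ) * hS.1.eigenvectorUnitary.1 = 1 :=
    Unitary.coe_star_mul_self _
  have hD : diagonal (fun i => ((Real.sqrt (hS.1.eigenvalues i) : ℝ) : ℝ)) *
      diagonal (fun i => ((Real.sqrt (hS.1.eigenvalues i) : ℝ) : ℝ))
      = diagonal (RCLike.ofReal ∘ hS.1.eigenvalues) := by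
    rw [diagonal_mul_diagonal]
    congr 1
    funext i
    simp [Real.mul_self_sqrt (hS.eigenvalues_nonneg i)]
  calc _ = hS.1.eigenvectorUnitary.1 * diagonal (fun i => ((Real.sqrt (hS.1.eigenvalues i) : ℝ) : ℝ))
        * ((star hS.1.eigenvectorUnitary : Matrix (Fin d) (Fin d) ℝ) * hS.1.eigenvectorUnitary.1)
        * diagonal (fun i => ((Real.sqrt (hS.1.eigenvalues i) : ℝ) : ℝ))
        * (star hS.1.eigenvectorUnitary : Matrix (Fin d) (Fin d) ℝ) := by
          simp only [Matrix.mul_assoc]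
          rfl
    _ = _ := by
          rw [hU, Matrix.mul_one, Matrix.mul_assoc _ (diagonal _) (diagonal _), hD]

end Aux

theorem riemannian_gradient_norm_bound
    (d r : ℕ) (hr : 1 ≤ r) (hrd : r < d)
    (S : Matrix (Fin d) (Fin d) ℝ) (hS : S.PosSemidef)
    (ρ : ℝ) (hρ : 0 < ρ)
    (w : Matrix (Fin d) (Fin r) ℝ → ℝ)
    (hw : ∀ Z, w Z = 2 * ρ *
      Real.sqrt ((((1 - Z * Zᵀ) * hS.sqrt)ᵀ * ((1 - Z * Zᵀ) * hS.sqrt)).trace))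
    (X : Matrix (Fin d) (Fin r) ℝ) (hX : Xᵀ * X = 1) (hwX : w X ≠ 0) :
    DifferentiableAt ℝ w X ∧
    ∃ G : Matrix (Fin d) (Fin r) ℝ,
      (∀ V : Matrix (Fin d) (Fin r) ℝ, fderiv ℝ w X V = (Gᵀ * V).trace) ∧
      (let P := G - (2 : ℝ)⁻¹ • (X * (Xᵀ * G + Gᵀ * X))
       Real.sqrt ((Pᵀ * P).trace)
          = 2 * ρ * Real.sqrt (((((1 - X * Xᵀ) * S * X)ᵀ) * ((1 - X * Xᵀ) * S * X)).trace)
            / Real.sqrt ((((1 - X * Xᵀ) * hS.sqrt)ᵀ * ((1 - X * Xᵀ) * hS.sqrt)).trace) ∧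
       Real.sqrt ((Pᵀ * P).trace) ≤ 2 * ρ * Real.sqrt (((hS.sqrtᵀ) * hS.sqrt).trace)) := by
  set A := hS.sqrt with hAdef
  have hAH : Aᵀ = A := by
    exact aux_psd_sqrt_transpose hS
  have hAA : A * A = S := aux_psd_sqrt_mul_self hS
  have hST : Sᵀ = S := by
    have h := hS.isHermitian
    rwa [Matrix.IsHermitian, Matrix.conjTranspose_eq_transpose_of_trivial] at h
  -- the function g
  set g : Matrix (Fin d) (Fin r) ℝ → ℝ :=
    fun Z => (((1 - Z * Zᵀ) * A)ᵀ * ((1 - Z * Zᵀ) * A)).trace with hgdef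
  have hwg : w = fun Z => 2 * ρ * Real.sqrt (g Z) := funext hw
  have hgX : g X ≠ 0 := by
    intro h
    apply hwX
    rw [hw X]
    change 2 * ρ * Real.sqrt (g X) = 0
    rw [h, Real.sqrt_zero, mul_zero]
  set s : ℝ := Real.sqrt (g X) with hsdef
  have hs_pos : 0 < s :=
    Real.sqrt_pos.mpr (lt_of_le_of_ne (aux_trace_nonneg _) (Ne.symm hgX))
  have hMT : (1 - X * Xᵀ)ᵀ = 1 - X * Xᵀ := by
    rw [Matrix.transpose_sub, Matrix.transpose_one, Matrix.transpose_mul,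
      Matrix.transpose_transpose]
  have hMX : (1 - X * Xᵀ) * X = 0 := by
    rw [Matrix.sub_mul, Matrix.one_mul, Matrix.mul_assoc, hX, Matrix.mul_one, sub_self]
  -- derivative chain
  have h1 := HasFDerivAt.comp (f := fun Z : Matrix (Fin d) (Fin r) ℝ => (Z, Z))
    (g := fun p : Matrix (Fin d) (Fin r) ℝ × Matrix (Fin d) (Fin r) ℝ => p.1 * p.2ᵀ) X
    (aux_isBBM_mulT.hasFDerivAt (X, X)) (HasFDerivAt.prodMk (hasFDerivAt_id X) (hasFDerivAt_id X))
  have hfun : (fun Z : Matrix (Fin d) (Fin r) ℝ => (1 - Z * Zᵀ) * A)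
      = fun Z => A - (Z * Zᵀ) * A := by
    funext Z
    rw [Matrix.sub_mul, Matrix.one_mul]
  have hu0 : HasFDerivAt (fun Z : Matrix (Fin d) (Fin r) ℝ => (1 - Z * Zᵀ) * A)
      (-((mulRightCLM A).comp ((aux_isBBM_mulT.deriv (X, X)).comp
        ((ContinuousLinearMap.id ℝ _).prod (ContinuousLinearMap.id ℝ _))))) X := by
    rw [hfun]
    exact ((mulRightCLM A).hasFDerivAt.comp X h1).const_sub A
  have hm := HasFDerivAt.comp
    (f := fun Z : Matrix (Fin d) (Fin r) ℝ => ((1 - Z * Zᵀ) * A, (1 - Z * Zᵀ) * A))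
    (g := fun p : Matrix (Fin d) (Fin d) ℝ × Matrix (Fin d) (Fin d) ℝ => p.1ᵀ * p.2) X
    (aux_isBBM_Tmul.hasFDerivAt ((1 - X * Xᵀ) * A, (1 - X * Xᵀ) * A)) (hu0.prodMk hu0)
  have Hg : ∃ L : @ContinuousLinearMap ℝ ℝ _ _ (RingHom.id ℝ) (Matrix (Fin d) (Fin r) ℝ)
      PseudoMetricSpace.toUniformSpace.toTopologicalSpace
      NormedAddCommGroup.toSeminormedAddCommGroup.toAddCommMonoid ℝ
      PseudoMetricSpace.toUniformSpace.toTopologicalSpace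
      NormedAddCommGroup.toSeminormedAddCommGroup.toAddCommMonoid
      NormedSpace.toModule NormedSpace.toModule, HasFDerivAt g L X ∧
      ∀ V, L V = -2 * ((((1 - X * Xᵀ) * S * X)ᵀ) * V).trace := by
    have hgF := traceCLM.hasFDerivAt.comp X hm
    refine ⟨_, hgF, ?_⟩
    intro V
    simp only [ContinuousLinearMap.comp_apply, IsBoundedBilinearMap.deriv_apply,
      ContinuousLinearMap.prod_apply, ContinuousLinearMap.neg_apply,
      ContinuousLinearMap.coe_id', id_eq, mulRightCLM_apply, traceCLM_apply]
    change Matrix.trace (_ : Matrix (Fin d) (Fin d) ℝ) = _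
    have swap : ((((X * Vᵀ + V * Xᵀ) * A))ᵀ * ((1 - X * Xᵀ) * A)).trace
        = (((1 - X * Xᵀ) * A)ᵀ * ((X * Vᵀ + V * Xᵀ) * A)).trace := by
      rw [← Matrix.trace_transpose, Matrix.transpose_mul, Matrix.transpose_transpose]
    rw [Matrix.mul_neg, Matrix.transpose_neg, Matrix.neg_mul, Matrix.trace_add,
      Matrix.trace_neg, Matrix.trace_neg, swap]
    have e2 : (((1 - X * Xᵀ) * A)ᵀ * ((X * Vᵀ + V * Xᵀ) * A)).trace
        = (((1 - X * Xᵀ) * S * X)ᵀ * V).trace := by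
      rw [Matrix.transpose_mul, hAH, hMT, Matrix.transpose_mul, Matrix.transpose_mul, hST, hMT]
      rw [Matrix.add_mul, Matrix.mul_add, Matrix.trace_add]
      have t1 : (A * (1 - X * Xᵀ) * (X * Vᵀ * A)).trace = 0 := by
        simp only [Matrix.mul_assoc]
        rw [← Matrix.mul_assoc (1 - X * Xᵀ) X, hMX, Matrix.zero_mul, Matrix.mul_zero,
          Matrix.trace_zero]
      rw [t1, zero_add]
      rw [Matrix.trace_mul_comm]
      simp only [Matrix.mul_assoc]
      rw [← Matrix.mul_assoc A A, hAA, Matrix.trace_mul_comm V]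
      simp only [Matrix.mul_assoc]
    rw [e2]
    ring
  obtain ⟨L, hLd, hLV⟩ := Hg
  have hwD : HasFDerivAt w ((2 * ρ) • ((1 / (2 * s)) • L)) X := by
    rw [hwg]
    exact (hLd.sqrt hgX).const_mul (2 * ρ)
  set B : Matrix (Fin d) (Fin r) ℝ := (1 - X * Xᵀ) * S * X with hBdef
  set G : Matrix (Fin d) (Fin r) ℝ := (-(2 * ρ / s)) • B with hGdef
  have hfd : ∀ V, fderiv ℝ w X V = ((Gᵀ * V)).trace := by
    intro V
    erw [hwD.fderiv]
    change (2 * ρ) * ((1 / (2 * s)) * L V) = _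
    simp only [ContinuousLinearMap.smul_apply, smul_eq_mul, hLV V]
    rw [hGdef, Matrix.transpose_smul, Matrix.smul_mul, Matrix.trace_smul, smul_eq_mul]
    field_simp
  have hXM : Xᵀ * (1 - X * Xᵀ) = 0 := by
    have h := congrArg Matrix.transpose hMX
    rwa [Matrix.transpose_mul, hMT, Matrix.transpose_zero] at h
  have hXG : Xᵀ * G = 0 := by
    rw [hGdef, Matrix.mul_smul, hBdef]
    simp only [← Matrix.mul_assoc]
    rw [hXM, Matrix.zero_mul, Matrix.zero_mul, smul_zero]
  have hGX : Gᵀ * X = 0 := by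
    rw [hGdef, Matrix.transpose_smul, Matrix.smul_mul, hBdef, Matrix.transpose_mul,
      Matrix.transpose_mul, hST, hMT]
    simp only [Matrix.mul_assoc]
    rw [hMX, Matrix.mul_zero, Matrix.mul_zero, smul_zero]
  have hP : G - (2 : ℝ)⁻¹ • (X * (Xᵀ * G + Gᵀ * X)) = G := by
    rw [hXG, hGX, add_zero, Matrix.mul_zero, smul_zero, sub_zero]
  have hs_eq : s = ‖(1 - X * Xᵀ) * A‖ := by
    rw [hsdef, hgdef]
    exact aux_sqrt_trace _
  have hGnorm : Real.sqrt ((Gᵀ * G).trace) = 2 * ρ / s * ‖B‖ := by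
    rw [aux_sqrt_trace, hGdef, norm_smul, Real.norm_eq_abs, abs_neg,
      abs_of_pos (by positivity)]
  have hM2 : (1 - X * Xᵀ) * (1 - X * Xᵀ) = 1 - X * Xᵀ := by
    have hXX : X * Xᵀ * (X * Xᵀ) = X * Xᵀ := by
      rw [Matrix.mul_assoc, ← Matrix.mul_assoc Xᵀ, hX, Matrix.one_mul]
    rw [Matrix.sub_mul, Matrix.one_mul, Matrix.mul_sub, Matrix.mul_one, hXX, sub_self,
      sub_zero]
  have hAXle : ‖A * X‖ ≤ ‖A‖ := by
    have k1 : ((A * (1 - X * Xᵀ))ᵀ * (A * (1 - X * Xᵀ))).trace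
        = (S * (1 - X * Xᵀ)).trace := by
      rw [Matrix.transpose_mul, hAH, hMT]
      simp only [Matrix.mul_assoc]
      rw [← Matrix.mul_assoc A A, hAA, Matrix.trace_mul_comm]
      simp only [Matrix.mul_assoc]
      rw [hM2]
    have k2 : ((A * X)ᵀ * (A * X)).trace = (S * (X * Xᵀ)).trace := by
      rw [Matrix.transpose_mul, hAH]
      simp only [Matrix.mul_assoc]
      rw [← Matrix.mul_assoc A A, hAA, Matrix.trace_mul_comm]
      simp only [Matrix.mul_assoc]
    have k3 : (Aᵀ * A).trace = S.trace := by rw [hAH, hAA]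
    have k4 : ‖A * X‖ ^ 2 ≤ ‖A‖ ^ 2 := by
      rw [aux_sq_norm, aux_sq_norm, k2, k3]
      have h5 := aux_trace_nonneg (A * (1 - X * Xᵀ))
      rw [k1, Matrix.mul_sub, Matrix.mul_one, Matrix.trace_sub] at h5
      linarith
    have h6 := Real.sqrt_le_sqrt k4
    rwa [Real.sqrt_sq (norm_nonneg _), Real.sqrt_sq (norm_nonneg _)] at h6
  have hBfac : (1 - X * Xᵀ) * S * X = ((1 - X * Xᵀ) * A) * (A * X) := by
    rw [← hAA]
    simp only [Matrix.mul_assoc]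
  have hBle : ‖B‖ ≤ s * ‖A‖ := by
    calc ‖B‖ = ‖((1 - X * Xᵀ) * A) * (A * X)‖ := by rw [hBdef, hBfac]
      _ ≤ ‖(1 - X * Xᵀ) * A‖ * ‖A * X‖ := Matrix.frobenius_norm_mul _ _
      _ ≤ ‖(1 - X * Xᵀ) * A‖ * ‖A‖ :=
          mul_le_mul_of_nonneg_left hAXle (norm_nonneg _)
      _ = s * ‖A‖ := by rw [hs_eq]
  refine ⟨hwD.differentiableAt, G, hfd, ?_⟩
  show Real.sqrt (((G - (2 : ℝ)⁻¹ • (X * (Xᵀ * G + Gᵀ * X)))ᵀ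
        * (G - (2 : ℝ)⁻¹ • (X * (Xᵀ * G + Gᵀ * X)))).trace)
      = 2 * ρ * Real.sqrt ((Bᵀ * B).trace) / Real.sqrt (g X) ∧
    Real.sqrt (((G - (2 : ℝ)⁻¹ • (X * (Xᵀ * G + Gᵀ * X)))ᵀ
        * (G - (2 : ℝ)⁻¹ • (X * (Xᵀ * G + Gᵀ * X)))).trace)
      ≤ 2 * ρ * Real.sqrt ((Aᵀ * A).trace)
  rw [hP, hGnorm]
  constructor
  · rw [aux_sqrt_trace B, ← hsdef]
    ring
  · rw [aux_sqrt_trace A]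
    rw [div_mul_eq_mul_div, div_le_iff₀ hs_pos]
    calc 2 * ρ * ‖B‖ ≤ 2 * ρ * (s * ‖A‖) := by
          have := mul_le_mul_of_nonneg_left hBle (by positivity : (0:ℝ) ≤ 2 * ρ)
          linarith
      _ = 2 * ρ * ‖A‖ * s := by ring
end

section
/- Let h(V) = ⟨G, V⟩ + (1/(2μ))‖V‖²_F + s(X + V) with s convex and μ > 0, and let V* minimize h over a linear subspace T. Then s(X) ≥ ⟨G, V*⟩ + (1/μ)‖V*‖²_F + s(X + V*). -/
open Matrix

theorem subproblem_optimality_inequality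
    (d r : ℕ) (μ : ℝ) (hμ : 0 < μ)
    (G X : Matrix (Fin d) (Fin r) ℝ)
    (s : Matrix (Fin d) (Fin r) ℝ → ℝ) (hs : ConvexOn ℝ Set.univ s)
    (h : Matrix (Fin d) (Fin r) ℝ → ℝ)
    (hh : ∀ V, h V = (Gᵀ * V).trace + (2 * μ)⁻¹ * ((Vᵀ * V).trace) + s (X + V))
    (T : Submodule ℝ (Matrix (Fin d) (Fin r) ℝ))
    (Vstar : Matrix (Fin d) (Fin r) ℝ) (hVT : Vstar ∈ T)
    (hmin : ∀ V ∈ T, h Vstar ≤ h V) :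
    s X ≥ (Gᵀ * Vstar).trace + μ⁻¹ * ((Vstarᵀ * Vstar).trace) + s (X + Vstar) := by
  set A := (Gᵀ * Vstar).trace with hA
  set N := (Vstarᵀ * Vstar).trace with hN
  set S := s (X + Vstar) with hS
  have key : ∀ t : ℝ, 0 ≤ t → t < 1 →
      A + (2 * μ)⁻¹ * (1 + t) * N + S ≤ s X := by
    intro t ht0 ht1
    have hmem : t • Vstar ∈ T := T.smul_mem t hVT
    have h1 := hmin _ hmem
    rw [hh, hh] at h1
    have e1 : (Gᵀ * (t • Vstar)).trace = t * A := by
      rw [Matrix.mul_smul, trace_smul]; simp [hA]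
    have e2 : ((t • Vstar)ᵀ * (t • Vstar)).trace = t * t * N := by
      rw [transpose_smul, Matrix.smul_mul, Matrix.mul_smul, smul_smul, trace_smul]
      simp [hN, smul_eq_mul]
    have e3 : X + t • Vstar = (1 - t) • X + t • (X + Vstar) := by
      ext i j
      simp [Matrix.add_apply, Matrix.smul_apply]
      ring
    have conv : s ((1 - t) • X + t • (X + Vstar)) ≤ (1 - t) * s X + t * S := by
      exact hs.2 (Set.mem_univ _) (Set.mem_univ _) (by linarith) ht0 (by ring)
    rw [e1, e2, e3] at h1
    have hμ2 : (0:ℝ) < (2 * μ)⁻¹ := by positivity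
    have h2 : A + (2 * μ)⁻¹ * N + S ≤ t * A + (2 * μ)⁻¹ * (t * t * N) + ((1 - t) * s X + t * S) := by
      calc A + (2 * μ)⁻¹ * N + S ≤ _ := h1
        _ ≤ _ := by linarith [conv]
    have h3 : (1 - t) * (A + (2 * μ)⁻¹ * (1 + t) * N + S) ≤ (1 - t) * s X := by nlinarith
    exact le_of_mul_le_mul_left h3 (by linarith)
  have cont : Continuous (fun t : ℝ => A + (2 * μ)⁻¹ * (1 + t) * N + S) := by
    continuity
  have lim : Filter.Tendsto (fun t : ℝ => A + (2 * μ)⁻¹ * (1 + t) * N + S)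
      (nhdsWithin 1 (Set.Iio 1)) (nhds (A + (2 * μ)⁻¹ * (1 + 1) * N + S)) :=
    (cont.tendsto 1).mono_left nhdsWithin_le_nhds
  have ev : ∀ᶠ t in nhdsWithin (1:ℝ) (Set.Iio 1),
      (fun t : ℝ => A + (2 * μ)⁻¹ * (1 + t) * N + S) t ≤ s X := by
    filter_upwards [Ioo_mem_nhdsLT_of_mem (by constructor <;> norm_num : (1:ℝ) ∈ Set.Ioc (0:ℝ) 1)] with t ht
    exact key t (le_of_lt ht.1) ht.2
  have final := le_of_tendsto lim ev
  have heq : (2 * μ)⁻¹ * (1 + 1) * N = μ⁻¹ * N := by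
    field_simp; ring
  linarith [final, heq.symm.le, heq.le]
end
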